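/- arXiv:1008.4970 — 7 statements merged into one kernel-verified Lean document; each statement's English description precedes it below -/
import Mathlib

section
/- Let x > 1 be real, 1/2 < α ≤ 1, k ≥ 0 an integer, and 1 < n ≤ x. Then (k+1)·( (n·x^k)^(1/2-α)/log(n·x^k) - (x^(k+2)/n)^(1/2-α)/log(x^(k+2)/n) ) ≥ (k+2)·( (n·x^(k+1))^(1/2-α)/log(n·x^(k+1)) - (x^(k+3)/n)^(1/2-α)/log(x^(k+3)/n) ). -/
open Real

/-!
Write `β = α - 1/2`, `L = log x` and `f t = exp (-β t) / t`, so that `y ^ (1/2 - α) / log y = f (log y)`.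
Both logarithms on the right are those on the left shifted by `L`, so the claim says that
`t ↦ (k + 1) f t - (k + 2) f (t + L)` decreases from `log (n x^k)` to `log (x^(k+2) / n) ≤ (k + 2) L`.
Its derivative is `(k + 2) g (t + L) - (k + 1) g t` with `g t = exp (-β t) (β t + 1) / t²`; it is
nonpositive because `t ↦ exp (-β t) (β t + 1)` decreases and `(k + 2) t² ≤ (k + 1) (t + L)²`
for `t ≤ (k + 2) L`.
-/

lemma hasDerivAt_exp_neg_mul_div (β : ℝ) {t : ℝ} (ht : t ≠ 0) :
    HasDerivAt (fun s => exp (-β * s) / s) (-(exp (-β * t) * (β * t + 1)) / t ^ 2) t :=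
  (((hasDerivAt_id' t).const_mul (-β)).exp.div (hasDerivAt_id' t) ht).congr_deriv (by ring)

section

variable {β L K t : ℝ}

lemma exp_neg_mul_add_mul_le (hβ : 0 ≤ β) (ht : 0 ≤ t) (hL : 0 ≤ L) :
    exp (-β * (t + L)) * (β * (t + L) + 1) ≤ exp (-β * t) * (β * t + 1) := by
  calc exp (-β * (t + L)) * (β * (t + L) + 1)
      ≤ exp (-β * (t + L)) * ((β * t + 1) * (β * L + 1)) := by
        gcongr; nlinarith [mul_nonneg (mul_nonneg hβ hβ) (mul_nonneg ht hL)]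
    _ ≤ exp (-β * (t + L)) * ((β * t + 1) * exp (β * L)) := by
        gcongr; exact add_one_le_exp _
    _ = exp (-β * t) * (β * t + 1) := by
        rw [show -β * t = -β * (t + L) + β * L by ring, exp_add]; ring

lemma mul_sq_le_mul_sq_add (hK : 0 ≤ K) (hL : 0 ≤ L) (ht : 0 ≤ t) (htK : t ≤ (K + 2) * L) :
    (K + 2) * t ^ 2 ≤ (K + 1) * (t + L) ^ 2 := by
  nlinarith [mul_nonneg (mul_nonneg hK ht) hL, mul_nonneg ht (sub_nonneg.2 htK), sq_nonneg L]

lemma mul_exp_neg_mul_div_sq_shift_le (hβ : 0 ≤ β) (hL : 0 ≤ L) (hK : 0 ≤ K) (ht : 0 < t)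
    (htK : t ≤ (K + 2) * L) :
    (K + 2) * (exp (-β * (t + L)) * (β * (t + L) + 1) / (t + L) ^ 2)
      ≤ (K + 1) * (exp (-β * t) * (β * t + 1) / t ^ 2) := by
  have hquot : (K + 2) / (t + L) ^ 2 ≤ (K + 1) / t ^ 2 := by
    rw [div_le_div_iff₀ (by positivity) (by positivity)]
    exact mul_sq_le_mul_sq_add hK hL ht.le htK
  calc (K + 2) * (exp (-β * (t + L)) * (β * (t + L) + 1) / (t + L) ^ 2)
      = (K + 2) / (t + L) ^ 2 * (exp (-β * (t + L)) * (β * (t + L) + 1)) := by ring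
    _ ≤ (K + 1) / t ^ 2 * (exp (-β * t) * (β * t + 1)) :=
        mul_le_mul hquot (exp_neg_mul_add_mul_le hβ ht.le hL) (by positivity) (by positivity)
    _ = (K + 1) * (exp (-β * t) * (β * t + 1) / t ^ 2) := by ring

lemma antitoneOn_mul_exp_neg_mul_div_sub_shift (hβ : 0 ≤ β) (hL : 0 ≤ L) (hK : 0 ≤ K) :
    AntitoneOn (fun t => (K + 1) * (exp (-β * t) / t) - (K + 2) * (exp (-β * (t + L)) / (t + L)))
      (Set.Ioc 0 ((K + 2) * L)) := by
  have hderiv : ∀ t : ℝ, 0 < t → HasDerivAt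
      (fun t => (K + 1) * (exp (-β * t) / t) - (K + 2) * (exp (-β * (t + L)) / (t + L)))
      ((K + 2) * (exp (-β * (t + L)) * (β * (t + L) + 1) / (t + L) ^ 2)
        - (K + 1) * (exp (-β * t) * (β * t + 1) / t ^ 2)) t := by
    intro t ht
    have hshift := (hasDerivAt_exp_neg_mul_div β (by positivity : t + L ≠ 0)).comp_add_const t L
    exact (((hasDerivAt_exp_neg_mul_div β ht.ne').const_mul (K + 1)).sub
      (hshift.const_mul (K + 2))).congr_deriv (by ring)
  refine antitoneOn_of_hasDerivWithinAt_nonpos (convex_Ioc _ _)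
    (fun t ht => (hderiv t ht.1).continuousAt.continuousWithinAt)
    (fun t ht => (hderiv t (interior_subset ht).1).hasDerivWithinAt) fun t ht => ?_
  rw [interior_Ioc] at ht
  exact sub_nonpos.2 (mul_exp_neg_mul_div_sq_shift_le hβ hL hK ht.1 ht.2.le)

lemma mul_exp_neg_mul_div_sub_shift_le (hβ : 0 ≤ β) (hL : 0 ≤ L) (hK : 0 ≤ K) {a b : ℝ}
    (ha : 0 < a) (hab : a ≤ b) (hb : b ≤ (K + 2) * L) :
    (K + 2) * (exp (-β * (a + L)) / (a + L) - exp (-β * (b + L)) / (b + L))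
      ≤ (K + 1) * (exp (-β * a) / a - exp (-β * b) / b) := by
  have h := antitoneOn_mul_exp_neg_mul_div_sub_shift hβ hL hK
    ⟨ha, hab.trans hb⟩ ⟨ha.trans_le hab, hb⟩ hab
  simp only at h
  linarith

end

theorem lemma_initial_ineq_general (x α : ℝ) (hx : 1 < x) (hα1 : 1/2 < α)
    (k : ℕ) (n : ℝ) (hn1 : 1 < n) (hn2 : n ≤ x) :
    (k + 1 : ℝ) * ((n * x ^ k) ^ (1/2 - α) / Real.log (n * x ^ k)
        - (x ^ (k + 2) / n) ^ (1/2 - α) / Real.log (x ^ (k + 2) / n))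
      ≥ (k + 2 : ℝ) * ((n * x ^ (k + 1)) ^ (1/2 - α) / Real.log (n * x ^ (k + 1))
        - (x ^ (k + 3) / n) ^ (1/2 - α) / Real.log (x ^ (k + 3) / n)) := by
  have hx0 : 0 < x := one_pos.trans hx
  have hn0 : 0 < n := one_pos.trans hn1
  have hL : 0 < log x := log_pos hx
  have hm : 0 < log n := log_pos hn1
  have hmL : log n ≤ log x := log_le_log hn0 hn2
  have hlog_mul (j : ℕ) : log (n * x ^ j) = log n + j * log x := by
    rw [log_mul hn0.ne' (by positivity), log_pow]
  have hlog_div (j : ℕ) : log (x ^ j / n) = j * log x - log n := by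
    rw [log_div (by positivity) hn0.ne', log_pow]
  have hshift_mul : log (n * x ^ (k + 1)) = log (n * x ^ k) + log x := by
    rw [hlog_mul, hlog_mul]; push_cast; ring
  have hshift_div : log (x ^ (k + 3) / n) = log (x ^ (k + 2) / n) + log x := by
    rw [hlog_div, hlog_div]; push_cast; ring
  have hrpow_div_log (y : ℝ) (hy : 0 < y) :
      y ^ (1/2 - α) / log y = exp (-(α - 1/2) * log y) / log y := by
    rw [rpow_def_of_pos hy]; ring_nf
  rw [hrpow_div_log _ (by positivity), hrpow_div_log _ (by positivity),
    hrpow_div_log _ (by positivity), hrpow_div_log _ (by positivity), hshift_mul, hshift_div]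
  refine mul_exp_neg_mul_div_sub_shift_le (by linarith) hL.le k.cast_nonneg ?_ ?_ ?_
  · rw [hlog_mul]; positivity
  · rw [hlog_mul, hlog_div]; push_cast; linarith
  · rw [hlog_div]; push_cast; linarith

theorem lemma_initial_ineq (x α : ℝ) (hx : 1 < x) (hα1 : 1/2 < α) (hα2 : α ≤ 1)
    (k : ℕ) (n : ℝ) (hn1 : 1 < n) (hn2 : n ≤ x) :
    (k + 1 : ℝ) * ((n * x ^ k) ^ (1/2 - α) / Real.log (n * x ^ k)
        - (x ^ (k + 2) / n) ^ (1/2 - α) / Real.log (x ^ (k + 2) / n))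
      ≥ (k + 2 : ℝ) * ((n * x ^ (k + 1)) ^ (1/2 - α) / Real.log (n * x ^ (k + 1))
        - (x ^ (k + 3) / n) ^ (1/2 - α) / Real.log (x ^ (k + 3) / n)) :=
  lemma_initial_ineq_general x α hx hα1 k n hn1 hn2
end

section
/- Let x ≥ 2 be real, 1/2 < α ≤ 1, k ≥ 1 an integer, and 2 ≤ n ≤ x real. Then 1/log x - 1/(x^(α-1/2)·log x) ≥ (k+1)/((k+2)·log x - log n) - (k+2)/(x^(α-1/2)·((k+3)·log x - log n)). -/
/-!
Write `L = log x`, `M = log n`, `X = x ^ (α - 1/2)` and `g d = (L - M) / (L * (d L - M))`.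
Then `(d - 1) / (d L - M) = 1/L - g d`, so the difference of the two sides is
`g (k + 2) - g (k + 3) / X`, which is nonnegative because `g` is nonnegative and
antitone in `d` and `X ≥ 1`.
-/

open Real

section

variable {L M c d e : ℝ}

lemma div_mul_sub_eq_one_div_sub (hL : L ≠ 0) (h : d * L - M ≠ 0) (hcd : d = c + 1) :
    c / (d * L - M) = 1 / L - (L - M) / (L * (d * L - M)) := by
  subst hcd
  field_simp
  ring

lemma sub_div_mul_mul_sub_le_of_le (hL : 0 < L) (hM : M ≤ L) (hd : 0 < d * L - M)
    (hde : d ≤ e) :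
    (L - M) / (L * (e * L - M)) ≤ (L - M) / (L * (d * L - M)) := by
  apply div_le_div_of_nonneg_left (sub_nonneg.2 hM) (mul_pos hL hd)
  gcongr

lemma add_one_div_sub_add_two_div_le {X a : ℝ} (hL : 0 < L) (hM : M ≤ L) (hX : 1 ≤ X)
    (ha : 0 ≤ a) :
    (a + 1) / ((a + 2) * L - M) - (a + 2) / (X * ((a + 3) * L - M)) ≤ 1 / L - 1 / (X * L) := by
  have h₂ : 0 < (a + 2) * L - M := by nlinarith
  have h₃ : 0 < (a + 3) * L - M := by nlinarith
  set g₂ := (L - M) / (L * ((a + 2) * L - M))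
  set g₃ := (L - M) / (L * ((a + 3) * L - M))
  have first : (a + 1) / ((a + 2) * L - M) = 1 / L - g₂ :=
    div_mul_sub_eq_one_div_sub hL.ne' h₂.ne' (by ring)
  have second : (a + 2) / (X * ((a + 3) * L - M)) = (1 / L - g₃) / X := by
    rw [← div_mul_sub_eq_one_div_sub (c := a + 2) hL.ne' h₃.ne' (by ring), div_div, mul_comm]
  have hg₃ : 0 ≤ g₃ := by
    have := sub_nonneg.2 hM
    positivity
  have hg : g₃ ≤ g₂ := sub_div_mul_mul_sub_le_of_le hL hM h₂ (by linarith)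
  have hg₃X : g₃ / X ≤ g₃ := div_le_self hg₃ hX
  rw [first, second, sub_div, div_div, mul_comm L X]
  linarith

end

theorem lemma_bound_sum_over_k_second_general (x α : ℝ) (hα1 : 1/2 < α)
    (k : ℕ) (n : ℝ) (hn1 : 2 ≤ n) (hn2 : n ≤ x) :
    1 / Real.log x - 1 / (x ^ (α - 1/2) * Real.log x)
      ≥ (k + 1 : ℝ) / ((k + 2) * Real.log x - Real.log n)
        - (k + 2 : ℝ) / (x ^ (α - 1/2) * ((k + 3) * Real.log x - Real.log n)) :=
  add_one_div_sub_add_two_div_le (Real.log_pos (by linarith))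
    (Real.log_le_log (by linarith) hn2) (Real.one_le_rpow (by linarith) (by linarith))
    k.cast_nonneg

theorem lemma_bound_sum_over_k_second (x α : ℝ) (hx : 2 ≤ x) (hα1 : 1/2 < α) (hα2 : α ≤ 1)
    (k : ℕ) (hk : 1 ≤ k) (n : ℝ) (hn1 : 2 ≤ n) (hn2 : n ≤ x) :
    1 / Real.log x - 1 / (x ^ (α - 1/2) * Real.log x)
      ≥ (k + 1 : ℝ) / ((k + 2) * Real.log x - Real.log n)
        - (k + 2 : ℝ) / (x ^ (α - 1/2) * ((k + 3) * Real.log x - Real.log n)) :=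
  lemma_bound_sum_over_k_second_general x α hα1 k n hn1 hn2
end

section
/- For real w > 0 and real numbers 0 < a < b, ∫_{-∞}^{∞} (2x(b²-a²))/((x²+b²)(x²+a²)) · e^(2πiwx) dx = 2πi·(e^(-2πwa) - e^(-2πwb)). -/
/-!
The left-hand side is the inverse Fourier transform, at `w`, of
`g x = 2x(b² - a²)/((x² + b²)(x² + a²))`. Integrating exponentials over the two half-lines shows
that `x ↦ sign x · exp(-c|x|)` has Fourier transform `-4πiξ/((2πξ)² + c²)`, so `g` is the Fourier
transform of `u x = 2πi · sign x · (exp(-2πa|x|) - exp(-2πb|x|))`. Both `u` and `g` are integrable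
and `u` is continuous at `w > 0`, so Fourier inversion gives `u w`, which is the right-hand side.
-/

open Real Complex MeasureTheory Set Filter FourierTransform

section Linearity

variable {V E : Type*} [NormedAddCommGroup V] [InnerProductSpace ℝ V] [FiniteDimensional ℝ V]
  [MeasurableSpace V] [BorelSpace V] [NormedAddCommGroup E] [NormedSpace ℂ E]

theorem fourier_sub_of_integrable {f g : V → E} (hf : Integrable f) (hg : Integrable g) :
    𝓕 (f - g) = 𝓕 f - 𝓕 g := by
  ext w
  simp only [Real.fourier_eq, Pi.sub_apply, smul_sub]
  exact integral_sub ((Real.fourierIntegral_convergent_iff w).2 hf)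
    ((Real.fourierIntegral_convergent_iff w).2 hg)

theorem fourier_const_smul (r : ℂ) (f : V → E) : 𝓕 (r • f) = r • 𝓕 f :=
  VectorFourier.fourierIntegral_const_smul _ _ _ f r

end Linearity

lemma one_div_add_mul_I_sub_one_div_sub_mul_I {c : ℝ} (hc : 0 < c) (t : ℝ) :
    1 / (c + t * I) - 1 / (c - t * I) = -(2 * t * I) / (t ^ 2 + c ^ 2) := by
  have h₁ : (c + t * I : ℂ) ≠ 0 := fun h ↦ hc.ne' (by simpa using congrArg re h)
  have h₂ : (c - t * I : ℂ) ≠ 0 := fun h ↦ hc.ne' (by simpa using congrArg re h)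
  have hprod : (c + t * I) * (c - t * I) = (t ^ 2 + c ^ 2 : ℂ) := by
    linear_combination (-(t : ℂ) ^ 2) * I_sq
  rw [div_sub_div _ _ h₁ h₂, hprod]
  ring

noncomputable def oddExpDecay (c x : ℝ) : ℂ := Real.sign x * Real.exp (-(c * |x|))

section OddExpDecay

variable {c : ℝ}

lemma oddExpDecay_of_pos {x : ℝ} (hx : 0 < x) : oddExpDecay c x = cexp (-c * x) := by
  simp [oddExpDecay, Real.sign_of_pos hx, abs_of_pos hx, Complex.ofReal_exp]

lemma oddExpDecay_of_neg {x : ℝ} (hx : x < 0) : oddExpDecay c x = -cexp (c * x) := by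
  simp [oddExpDecay, Real.sign_of_neg hx, abs_of_neg hx, Complex.ofReal_exp]

lemma continuousAt_oddExpDecay {x : ℝ} (hx : 0 < x) : ContinuousAt (oddExpDecay c) x :=
  (by fun_prop : Continuous fun y : ℝ ↦ cexp (-c * y)).continuousAt.congr <|
    eventually_of_mem (Ioi_mem_nhds hx) fun _ hy ↦ (oddExpDecay_of_pos hy).symm

lemma fourierChar_smul_oddExpDecay_of_pos (ξ : ℝ) {x : ℝ} (hx : 0 < x) :
    𝐞 (-(x * ξ)) • oddExpDecay c x = cexp (-(c + ↑(2 * π * ξ) * I) * x) := by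
  rw [oddExpDecay_of_pos hx, Circle.smul_def, Real.fourierChar_apply, smul_eq_mul,
    ← Complex.exp_add]
  congr 1
  push_cast
  ring

lemma fourierChar_smul_oddExpDecay_of_neg (ξ : ℝ) {x : ℝ} (hx : x < 0) :
    𝐞 (-(x * ξ)) • oddExpDecay c x = -cexp ((c - ↑(2 * π * ξ) * I) * x) := by
  rw [oddExpDecay_of_neg hx, Circle.smul_def, Real.fourierChar_apply, smul_eq_mul, mul_neg,
    ← Complex.exp_add]
  congr 2
  push_cast
  ring

lemma integrableOn_Ioi_fourierChar_smul_oddExpDecay (hc : 0 < c) (ξ : ℝ) :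
    IntegrableOn (fun x ↦ 𝐞 (-(x * ξ)) • oddExpDecay c x) (Ioi 0) :=
  (integrableOn_exp_mul_complex_Ioi (by simpa using hc) 0).congr_fun
    (fun _ hx ↦ (fourierChar_smul_oddExpDecay_of_pos ξ hx).symm) measurableSet_Ioi

lemma integrableOn_Iio_fourierChar_smul_oddExpDecay (hc : 0 < c) (ξ : ℝ) :
    IntegrableOn (fun x ↦ 𝐞 (-(x * ξ)) • oddExpDecay c x) (Iio 0) :=
  ((integrableOn_exp_mul_complex_Iic (by simpa using hc) 0).mono_set
    Iio_subset_Iic_self).neg.congr_fun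
    (fun _ hx ↦ (fourierChar_smul_oddExpDecay_of_neg ξ hx).symm) measurableSet_Iio

lemma integrable_oddExpDecay (hc : 0 < c) : Integrable (oddExpDecay c) := by
  have h := ((integrableOn_Iic_iff_integrableOn_Iio).2
    (integrableOn_Iio_fourierChar_smul_oddExpDecay hc 0)).union
    (integrableOn_Ioi_fourierChar_smul_oddExpDecay hc 0)
  rw [Iic_union_Ioi, integrableOn_univ] at h
  simpa using h

lemma fourier_oddExpDecay (hc : 0 < c) (ξ : ℝ) :
    𝓕 (oddExpDecay c) ξ = -(2 * ↑(2 * π * ξ) * I) / (↑(2 * π * ξ) ^ 2 + c ^ 2) := by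
  have hIio := integrableOn_Iio_fourierChar_smul_oddExpDecay hc ξ
  have hIoi := integrableOn_Ioi_fourierChar_smul_oddExpDecay hc ξ
  rw [Real.fourier_real_eq, ← intervalIntegral.integral_Iic_add_Ioi
    ((integrableOn_Iic_iff_integrableOn_Iio).2 hIio) hIoi, integral_Iic_eq_integral_Iio,
    setIntegral_congr_fun measurableSet_Iio fun _ hx ↦ fourierChar_smul_oddExpDecay_of_neg ξ hx,
    setIntegral_congr_fun measurableSet_Ioi fun _ hx ↦ fourierChar_smul_oddExpDecay_of_pos ξ hx,
    integral_neg, ← integral_Iic_eq_integral_Iio,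
    integral_exp_mul_complex_Iic (by simpa using hc),
    integral_exp_mul_complex_Ioi (by simpa using hc),
    ← one_div_add_mul_I_sub_one_div_sub_mul_I hc]
  simp only [ofReal_zero, mul_zero, Complex.exp_zero, neg_div_neg_eq]
  ring

end OddExpDecay

lemma integrable_inv_sq_add_sq {b : ℝ} (hb : b ≠ 0) :
    Integrable fun x : ℝ ↦ (x ^ 2 + b ^ 2)⁻¹ := by
  refine ((integrable_inv_one_add_sq.comp_div hb).const_mul (b ^ 2)⁻¹).congr
    (ae_of_all _ fun x ↦ ?_)
  field_simp
  ring

lemma integrable_mul_div_sq_add_sq_mul_sq_add_sq {a b : ℝ} (ha : 0 < a) (hb : 0 < b) :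
    Integrable fun x : ℝ ↦ 2 * x * (b ^ 2 - a ^ 2) / ((x ^ 2 + b ^ 2) * (x ^ 2 + a ^ 2)) := by
  refine ((integrable_inv_sq_add_sq hb.ne').const_mul (|b ^ 2 - a ^ 2| / a)).mono'
    (by fun_prop : Measurable _).aestronglyMeasurable (ae_of_all _ fun x ↦ ?_)
  have hx : 2 * |x| * a ≤ x ^ 2 + a ^ 2 := by nlinarith [sq_nonneg (|x| - a), sq_abs x]
  rw [Real.norm_eq_abs, abs_div, abs_mul, abs_mul, abs_two,
    abs_of_pos (by positivity : 0 < (x ^ 2 + b ^ 2) * (x ^ 2 + a ^ 2)),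
    div_le_iff₀ (by positivity)]
  field_simp
  nlinarith [mul_le_mul_of_nonneg_left hx (abs_nonneg (b ^ 2 - a ^ 2))]

lemma fourier_smul_oddExpDecay_sub {a b : ℝ} (ha : 0 < a) (hb : 0 < b) :
    𝓕 ((2 * π * I : ℂ) • (oddExpDecay (2 * π * a) - oddExpDecay (2 * π * b))) =
      fun x : ℝ ↦ ((2 * x * (b ^ 2 - a ^ 2)) / ((x ^ 2 + b ^ 2) * (x ^ 2 + a ^ 2)) : ℂ) := by
  rw [fourier_const_smul, fourier_sub_of_integrable (integrable_oddExpDecay (by positivity))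
    (integrable_oddExpDecay (by positivity))]
  ext ξ
  simp only [Pi.smul_apply, Pi.sub_apply, smul_eq_mul,
    fourier_oddExpDecay (by positivity : 0 < 2 * π * a),
    fourier_oddExpDecay (by positivity : 0 < 2 * π * b)]
  have hne : ∀ c : ℝ, 0 < c → ((ξ : ℂ) ^ 2 + c ^ 2) ≠ 0 := fun c hc ↦ by
    exact_mod_cast (by positivity : ξ ^ 2 + c ^ 2 ≠ 0)
  have ha' := hne a ha
  have hb' := hne b hb
  push_cast
  field_simp
  rw [I_sq]
  ring

theorem contour_integral_one (w a b : ℝ) (hw : 0 < w) (ha : 0 < a) (hab : a < b) :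
    ∫ x : ℝ, ((2 * x * (b ^ 2 - a ^ 2)) / ((x ^ 2 + b ^ 2) * (x ^ 2 + a ^ 2)) : ℂ)
        * Complex.exp (2 * π * Complex.I * w * x)
      = 2 * π * Complex.I * (Complex.exp (-2 * π * w * a) - Complex.exp (-2 * π * w * b)) := by
  have hb : 0 < b := ha.trans hab
  have h2πa : 0 < 2 * π * a := by positivity
  have h2πb : 0 < 2 * π * b := by positivity
  set u := (2 * π * I : ℂ) • (oddExpDecay (2 * π * a) - oddExpDecay (2 * π * b))
  have hu : Integrable u :=
    ((integrable_oddExpDecay h2πa).sub (integrable_oddExpDecay h2πb)).smul _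
  have hFu : 𝓕 u = _ := fourier_smul_oddExpDecay_sub ha hb
  have hFu_int : Integrable (𝓕 u) := by
    rw [hFu]
    exact (integrable_mul_div_sq_add_sq_mul_sq_add_sq ha hb).ofReal.congr
      (ae_of_all _ fun x ↦ by push_cast; rfl)
  have hcont : ContinuousAt u w :=
    ((continuousAt_oddExpDecay hw).sub (continuousAt_oddExpDecay hw)).const_smul _
  calc _ = 𝓕⁻ (𝓕 u) w := by
        rw [hFu, fourierInv_eq']
        congr 1 with x
        rw [Real.inner_apply, smul_eq_mul, mul_comm]
        push_cast
        ring_nf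
    _ = u w := hu.fourierInv_fourier_eq hFu_int hcont
    _ = _ := by
        simp only [u, Pi.smul_apply, Pi.sub_apply, oddExpDecay_of_pos hw, smul_eq_mul]
        push_cast
        ring_nf
end

section
/- For real numbers 0 < a < b, ∑_{n∈ℤ} log(((n+1/2)²+b²)/((n+1/2)²+a²)) = 2π(b-a) - 2·log((1+e^{-2πa})/(1+e^{-2πb})). -/
/-!
Substituting `z = i x` into Euler's sine product gives `sinh (π x) = π x ∏ (1 + x² / (j + 1)²)`.
Splitting the product for `2x` over even and odd indices and using `sinh 2y = 2 sinh y cosh y`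
yields `cosh (π x) = ∏ (1 + x² / (j + 1/2)²)`, hence
`∑_{n ≥ 0} log (1 + x² / (n + 1/2)²) = log cosh (π x)`. The summand of the theorem is
`log (1 + b²/t²) - log (1 + a²/t²)` at `t = n + 1/2`, which is invariant under `n ↦ -1 - n`,
so the sum over `ℤ` is `2 (log cosh (π b) - log cosh (π a))`; finally
`log cosh t = t + log (1 + e^{-2t}) - log 2`.
-/

open Real Filter Finset Topology

theorem tendsto_euler_sinh_prod (x : ℝ) :
    Tendsto (fun n : ℕ => π * x * ∏ j ∈ range n, (1 + x ^ 2 / ((j : ℝ) + 1) ^ 2))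
      atTop (𝓝 (sinh (π * x))) := by
  have h := (Complex.continuous_im.tendsto _).comp
    (Complex.tendsto_euler_sin_prod (x * Complex.I))
  convert h using 1
  · ext n
    have (j : ℕ) : (1 : ℂ) - (x * Complex.I) ^ 2 / ((j : ℂ) + 1) ^ 2
        = ((1 + x ^ 2 / ((j : ℝ) + 1) ^ 2 : ℝ) : ℂ) := by
      push_cast
      rw [mul_pow, Complex.I_sq]
      ring
    simp only [Function.comp_apply, this, ← Complex.ofReal_prod, ← mul_assoc,
      ← Complex.ofReal_mul, mul_right_comm _ Complex.I, Complex.mul_I_im, Complex.ofReal_re]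
  · rw [← mul_assoc, ← Complex.ofReal_mul, Complex.sin_mul_I, ← Complex.ofReal_sinh,
      Complex.mul_I_im, Complex.ofReal_re]

theorem prod_range_two_mul_one_add_sq_div_sq (x : ℝ) (n : ℕ) :
    ∏ j ∈ range (2 * n), (1 + (2 * x) ^ 2 / ((j : ℝ) + 1) ^ 2)
      = (∏ j ∈ range n, (1 + x ^ 2 / ((j : ℝ) + 1) ^ 2))
        * ∏ j ∈ range n, (1 + x ^ 2 / ((j : ℝ) + 1 / 2) ^ 2) := by
  induction n with
  | zero => simp
  | succ n ih =>
    have h : (1 + (2 * x) ^ 2 / ((2 * n : ℝ) + 1) ^ 2)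
          * (1 + (2 * x) ^ 2 / ((2 * n + 1 : ℝ) + 1) ^ 2)
        = (1 + x ^ 2 / ((n : ℝ) + 1) ^ 2) * (1 + x ^ 2 / ((n : ℝ) + 1 / 2) ^ 2) := by
      field_simp
      ring
    rw [Nat.mul_succ, prod_range_succ, prod_range_succ, prod_range_succ, prod_range_succ, ih,
      mul_mul_mul_comm, mul_assoc]
    push_cast
    rw [h]

theorem tendsto_euler_cosh_prod (x : ℝ) :
    Tendsto (fun n : ℕ => ∏ j ∈ range n, (1 + x ^ 2 / ((j : ℝ) + 1 / 2) ^ 2))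
      atTop (𝓝 (cosh (π * x))) := by
  rcases eq_or_ne x 0 with rfl | hx
  · simp
  have hsinh : sinh (π * x) ≠ 0 := sinh_ne_zero.mpr (by positivity)
  have h := ((tendsto_euler_sinh_prod (2 * x)).comp (tendsto_id.const_mul_atTop' two_pos)).div
    ((tendsto_euler_sinh_prod x).const_mul 2) (mul_ne_zero two_ne_zero hsinh)
  rw [show π * (2 * x) = 2 * (π * x) by ring, sinh_two_mul, mul_assoc,
    mul_div_mul_left _ _ two_ne_zero, mul_div_cancel_left₀ _ hsinh] at h
  refine h.congr fun n => ?_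
  have hP : ∏ j ∈ range n, (1 + x ^ 2 / ((j : ℝ) + 1) ^ 2) ≠ 0 :=
    (prod_pos fun j _ => by positivity).ne'
  simp only [Pi.div_apply, Function.comp_apply, id, prod_range_two_mul_one_add_sq_div_sq]
  field_simp

theorem hasSum_log_one_add_sq_div_sq_half (x : ℝ) :
    HasSum (fun n : ℕ => log (1 + x ^ 2 / ((n : ℝ) + 1 / 2) ^ 2)) (log (cosh (π * x))) := by
  rw [hasSum_iff_tendsto_nat_of_nonneg
    fun n => log_nonneg (le_add_of_nonneg_right (by positivity))]
  refine ((continuousAt_log (cosh_pos _).ne').tendsto.comp (tendsto_euler_cosh_prod x)).congr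
    fun n => ?_
  exact log_prod fun j _ => by positivity

theorem log_div_add_sq_add_sq (t a b : ℝ) (ht : t ≠ 0) :
    log ((t ^ 2 + b ^ 2) / (t ^ 2 + a ^ 2))
      = log (1 + b ^ 2 / t ^ 2) - log (1 + a ^ 2 / t ^ 2) := by
  rw [← log_div (by positivity) (by positivity)]
  congr 1
  field_simp

theorem log_cosh_eq (t : ℝ) : log (cosh t) = t + log (1 + exp (-2 * t)) - log 2 := by
  have h : cosh t = exp t * (1 + exp (-2 * t)) / 2 := by
    rw [cosh_eq, mul_add, mul_one, ← exp_add]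
    ring_nf
  rw [h, log_div (by positivity) two_ne_zero, log_mul (exp_pos _).ne' (by positivity), log_exp]

theorem sum_log_half_integers_general (a b : ℝ) :
    ∑' n : ℤ, Real.log ((((n : ℝ) + 1/2) ^ 2 + b ^ 2) / (((n : ℝ) + 1/2) ^ 2 + a ^ 2))
      = 2 * π * (b - a)
        - 2 * Real.log ((1 + Real.exp (-2 * π * a)) / (1 + Real.exp (-2 * π * b))) := by
  set f : ℤ → ℝ := fun n => log ((((n : ℝ) + 1/2) ^ 2 + b ^ 2) / (((n : ℝ) + 1/2) ^ 2 + a ^ 2))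
  have hnat : HasSum (fun n : ℕ => f n) (log (cosh (π * b)) - log (cosh (π * a))) := by
    refine ((hasSum_log_one_add_sq_div_sq_half b).sub
      (hasSum_log_one_add_sq_div_sq_half a)).congr_fun fun n => ?_
    simp only [f, Int.cast_natCast]
    exact log_div_add_sq_add_sq _ a b (by positivity)
  have hsymm (n : ℕ) : f (-(n + 1)) = f n := by
    simp only [f, show ((-(n + 1 : ℤ) : ℤ) : ℝ) + 1 / 2 = -((n : ℤ) + 1 / 2) by push_cast; ring,
      neg_sq]
  rw [(hnat.of_nat_of_neg_add_one (by simpa only [hsymm] using hnat)).tsum_eq, log_cosh_eq,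
    log_cosh_eq, log_div (by positivity) (by positivity)]
  ring_nf

theorem sum_log_half_integers (a b : ℝ) (ha : 0 < a) (hab : a < b) :
    ∑' n : ℤ, Real.log ((((n : ℝ) + 1/2) ^ 2 + b ^ 2) / (((n : ℝ) + 1/2) ^ 2 + a ^ 2))
      = 2 * π * (b - a)
        - 2 * Real.log ((1 + Real.exp (-2 * π * a)) / (1 + Real.exp (-2 * π * b))) :=
  sum_log_half_integers_general a b
end

section
/- For real numbers 0 < a < b, ∑_{n∈ℤ} log((n²+b²)/(n²+a²)) = 2π(b-a) - 2·log((1-e^{-2πa})/(1-e^{-2πb})), where the n = 0 term is log(b²/a²). -/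
/-!
Euler's product `sin (π z) = π z ∏ (1 - z² / n²)` at `z = x i` gives
`sinh (π x) / (π x) = ∏_{n ≥ 1} (1 + x² / n²)`. Since
`(n² + b²) / (n² + a²) = (1 + b² / n²) / (1 + a² / n²)`, the sum over `n ∈ ℤ` telescopes into
`2 log (sinh (π b) / sinh (π a))`, and `sinh t = eᵗ (1 - e⁻²ᵗ) / 2` turns this into the
stated closed form.
-/

open Real Filter Topology Finset

lemma tendsto_prod_one_add_sq_div_sq {x : ℝ} (hx : x ≠ 0) :
    Tendsto (fun n : ℕ => ∏ j ∈ range n, (1 + x ^ 2 / ((j : ℝ) + 1) ^ 2))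
      atTop (𝓝 (sinh (π * x) / (π * x))) := by
  rw [← tendsto_ofReal_iff]
  have hxI : (x : ℂ) * Complex.I ≠ 0 := by simpa using hx
  convert tendsto_euler_sin_prod' hxI using 2 with n
  · push_cast
    refine prod_congr rfl fun j _ => ?_
    rw [sineTerm, mul_pow, Complex.I_sq]
    ring
  · rw [← mul_assoc, ← Complex.ofReal_mul, Complex.sin_mul_I]
    have hpx : (π : ℂ) * x ≠ 0 := by simp [pi_ne_zero, hx]
    push_cast
    field_simp

lemma hasSum_log_one_add_sq_div_sq {x : ℝ} (hx : x ≠ 0) :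
    HasSum (fun n : ℕ => log (1 + x ^ 2 / ((n : ℝ) + 1) ^ 2)) (log (sinh (π * x) / (π * x))) := by
  have hnonneg (n : ℕ) : 0 ≤ log (1 + x ^ 2 / ((n : ℝ) + 1) ^ 2) :=
    log_nonneg (le_add_of_nonneg_right (by positivity))
  rw [hasSum_iff_tendsto_nat_of_nonneg hnonneg]
  have hlim : sinh (π * x) / (π * x) ≠ 0 := by
    have : π * x ≠ 0 := mul_ne_zero pi_ne_zero hx
    positivity
  refine ((continuousAt_log hlim).tendsto.comp (tendsto_prod_one_add_sq_div_sq hx)).congr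
    fun n => ?_
  exact log_prod fun j _ => by positivity

lemma log_sq_add_sq_div_sq_add_sq {m : ℝ} (hm : m ≠ 0) (a b : ℝ) :
    log ((m ^ 2 + b ^ 2) / (m ^ 2 + a ^ 2)) = log (1 + b ^ 2 / m ^ 2) - log (1 + a ^ 2 / m ^ 2) := by
  rw [← log_div (by positivity) (by positivity)]
  congr 1
  field_simp

lemma hasSum_int_log_sq_add_sq_div_sq_add_sq {a b : ℝ} (ha : a ≠ 0) (hb : b ≠ 0) :
    HasSum (fun n : ℤ => log (((n : ℝ) ^ 2 + b ^ 2) / ((n : ℝ) ^ 2 + a ^ 2)))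
      (2 * log (sinh (π * b) / sinh (π * a))) := by
  set S := log (sinh (π * b) / (π * b)) - log (sinh (π * a) / (π * a))
  have hS : HasSum (fun n : ℕ => log ((((n : ℝ) + 1) ^ 2 + b ^ 2) / (((n : ℝ) + 1) ^ 2 + a ^ 2))) S :=
    ((hasSum_log_one_add_sq_div_sq hb).sub (hasSum_log_one_add_sq_div_sq ha)).congr_fun
      fun n => log_sq_add_sq_div_sq_add_sq (by positivity) a b
  have hsum := HasSum.of_add_one_of_neg_add_one (f := fun n : ℤ =>
    log (((n : ℝ) ^ 2 + b ^ 2) / ((n : ℝ) ^ 2 + a ^ 2))) (by simpa using hS)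
    (by convert hS using 3 with n; push_cast; ring)
  -- the `n = 0` term `log (b² / a²)` cancels the factors `π b`, `π a` in the two copies of `S`
  convert hsum using 1
  have hpa : π * a ≠ 0 := mul_ne_zero pi_ne_zero ha
  have hpb : π * b ≠ 0 := mul_ne_zero pi_ne_zero hb
  simp only [S, Int.cast_zero, zero_pow two_ne_zero, zero_add]
  rw [log_div (by positivity) (by positivity), log_div (by positivity) hpb,
    log_div (by positivity) hpa, log_div (by positivity) (by positivity),
    log_mul pi_ne_zero hb, log_mul pi_ne_zero ha, log_pow, log_pow]
  push_cast
  ring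

lemma sinh_eq_exp_mul_one_sub_exp_neg_two_mul (t : ℝ) :
    sinh t = exp t * (1 - exp (-2 * t)) / 2 := by
  rw [sinh_eq, mul_sub, mul_one, ← exp_add]
  ring_nf

lemma log_sinh_div_sinh {s t : ℝ} (hs : 0 < s) (ht : 0 < t) :
    log (sinh t / sinh s) = t - s - log ((1 - exp (-2 * s)) / (1 - exp (-2 * t))) := by
  have hpos {u : ℝ} (hu : 0 < u) : 0 < 1 - exp (-2 * u) := by
    rw [sub_pos, exp_lt_one_iff]
    linarith
  have hs' := hpos hs
  have ht' := hpos ht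
  have hquot : sinh t / sinh s = exp (t - s) / ((1 - exp (-2 * s)) / (1 - exp (-2 * t))) := by
    rw [sinh_eq_exp_mul_one_sub_exp_neg_two_mul, sinh_eq_exp_mul_one_sub_exp_neg_two_mul, exp_sub]
    field_simp
  rw [hquot, log_div (by positivity) (by positivity), log_exp]

theorem sum_log_integers (a b : ℝ) (ha : 0 < a) (hab : a < b) :
    ∑' n : ℤ, Real.log (((n : ℝ) ^ 2 + b ^ 2) / ((n : ℝ) ^ 2 + a ^ 2))
      = 2 * π * (b - a)
        - 2 * Real.log ((1 - Real.exp (-2 * π * a)) / (1 - Real.exp (-2 * π * b))) := by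
  have hb : 0 < b := ha.trans hab
  rw [(hasSum_int_log_sq_add_sq_div_sq_add_sq ha.ne' hb.ne').tsum_eq,
    log_sinh_div_sinh (by positivity) (by positivity)]
  simp only [mul_assoc]
  ring
end

section
/- For 1/2 < α < 1 and real x ≥ 2, ∫₂^x dt/(t^α · log t) ≤ x^{1-α}/((1-α)·log x) + log log x + C·( x^{1-α}/((1-α)²·(log x)²) + 1 ) for some absolute constant C. -/
/-!
The substitution `v = (1 - α) log t` turns the integral into `∫ e^v / v` over
`[(1 - α) log 2, (1 - α) log x]`, whose lower end lies in `(0, 1)`, and at the upper end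
`b = (1 - α) log x` one has `e^b / b = x^(1-α) / ((1-α) log x)` and
`e^b / b² = x^(1-α) / ((1-α)² (log x)²)`. On `(0, 4]` the bound `e^v / v ≤ 1 / v + e^v` costs
`log b - log a + e^4`, which is `log log x` up to a constant; on `[4, ∞)` the integrand is
dominated by the derivative of `e^v / v + 2 e^v / v²`.
-/

open Real intervalIntegral MeasureTheory Set

lemma intervalIntegrable_exp_div_self {a b : ℝ} (ha : 0 < a) (hb : 0 < b) :
    IntervalIntegrable (fun v => exp v / v) volume a b :=
  (continuousOn_exp.div continuousOn_id fun _ hv =>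
    (lt_min ha hb |>.trans_le hv.1).ne').intervalIntegrable

lemma exp_div_self_le_inv_add_exp {v : ℝ} (hv : 0 < v) : exp v / v ≤ v⁻¹ + exp v := by
  have h := mul_le_mul_of_nonneg_right (add_one_le_exp (-v)) (exp_pos v).le
  rw [← exp_add, neg_add_cancel, exp_zero] at h
  rw [div_le_iff₀ hv, add_mul, inv_mul_cancel₀ hv.ne']
  linarith

lemma integral_exp_div_self_le_log_sub_log_add_exp {a b : ℝ} (ha : 0 < a) (hab : a ≤ b) :
    ∫ v in a..b, exp v / v ≤ log b - log a + exp b := by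
  have hb : 0 < b := ha.trans_le hab
  have hinv : IntervalIntegrable (fun v : ℝ => v⁻¹) volume a b :=
    intervalIntegral.intervalIntegrable_inv (fun v hv => (lt_min ha hb |>.trans_le hv.1).ne')
      continuousOn_id
  calc ∫ v in a..b, exp v / v
      ≤ ∫ v in a..b, (v⁻¹ + exp v) :=
        integral_mono_on hab (intervalIntegrable_exp_div_self ha hb)
          (hinv.add (continuous_exp.intervalIntegrable a b))
          fun v hv => exp_div_self_le_inv_add_exp (ha.trans_le hv.1)
    _ = log b - log a + (exp b - exp a) := by
        rw [integral_add hinv (continuous_exp.intervalIntegrable a b), integral_inv_of_pos ha hb,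
          integral_exp, log_div hb.ne' ha.ne']
    _ ≤ log b - log a + exp b := by linarith [exp_pos a]

lemma hasDerivAt_exp_div_self_add_two_mul_exp_div_sq {v : ℝ} (hv : v ≠ 0) :
    HasDerivAt (fun v => exp v / v + 2 * (exp v / v ^ 2))
      (exp v / v + exp v * (v - 4) / v ^ 3) v := by
  have h := ((hasDerivAt_exp v).div (hasDerivAt_id' v) hv).add
    (((hasDerivAt_exp v).div (hasDerivAt_pow 2 v) (pow_ne_zero 2 hv)).const_mul 2)
  refine h.congr_deriv ?_
  field_simp
  ring

lemma integral_exp_div_self_le_of_four_le {a b : ℝ} (ha : 4 ≤ a) (hab : a ≤ b) :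
    ∫ v in a..b, exp v / v ≤ exp b / b + 2 * (exp b / b ^ 2) := by
  have hpos : ∀ v ∈ Icc a b, 0 < v := fun v hv => by linarith [hv.1]
  have hG := integral_le_sub_of_hasDeriv_right_of_le hab
    (fun v hv => (hasDerivAt_exp_div_self_add_two_mul_exp_div_sq
      (hpos v hv).ne').continuousAt.continuousWithinAt)
    (fun v hv => (hasDerivAt_exp_div_self_add_two_mul_exp_div_sq
      (hpos v (Ioo_subset_Icc_self hv)).ne').hasDerivWithinAt)
    ((intervalIntegrable_iff_integrableOn_Icc_of_le hab).1
      (intervalIntegrable_exp_div_self (by linarith) (by linarith)))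
    (fun v hv => le_add_of_nonneg_right <|
      div_nonneg (mul_nonneg (exp_pos v).le (by linarith [hv.1]))
        (pow_nonneg (by linarith [hv.1]) 3))
  have hGa : 0 ≤ exp a / a + 2 * (exp a / a ^ 2) := by
    have : 0 < a := by linarith
    positivity
  linarith

lemma integral_exp_div_self_le {a b : ℝ} (ha : 0 < a) (ha4 : a ≤ 4) (hab : a ≤ b) :
    ∫ v in a..b, exp v / v ≤ exp b / b + 2 * (exp b / b ^ 2) + (log b - log a) + exp 4 := by
  have hb : 0 < b := ha.trans_le hab
  have hmain : 0 ≤ exp b / b + 2 * (exp b / b ^ 2) := by positivity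
  rcases le_total b 4 with hb4 | hb4
  · have := integral_exp_div_self_le_log_sub_log_add_exp ha hab
    linarith [exp_le_exp.2 hb4]
  · rw [← integral_add_adjacent_intervals (b := 4) (intervalIntegrable_exp_div_self ha four_pos)
      (intervalIntegrable_exp_div_self four_pos hb)]
    have h₁ := integral_exp_div_self_le_log_sub_log_add_exp ha ha4
    have h₂ := integral_exp_div_self_le_of_four_le le_rfl hb4
    linarith [log_le_log four_pos hb4]

lemma integral_one_div_rpow_mul_log_eq {α a b : ℝ} (hα : α < 1) (ha : 0 < a) (hb : 0 < b) :
    ∫ t in a..b, 1 / (t ^ α * log t)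
      = ∫ v in (1 - α) * log a..(1 - α) * log b, exp v / v := by
  have hpos : ∀ t ∈ uIcc a b, 0 < t := fun t ht => (lt_min ha hb).trans_le ht.1
  have hpos' : ∀ t ∈ Ioo (min a b) (max a b), 0 < t := fun t ht => (lt_min ha hb).trans ht.1
  rw [← integral_comp_mul_deriv_of_deriv_nonneg (g := fun v => exp v / v)
    (f := fun t => (1 - α) * log t) (f' := fun t => (1 - α) / t)
    (continuousOn_const.mul (continuousOn_log.mono fun t ht => (hpos t ht).ne'))
    (fun t ht => ((hasDerivAt_log (hpos' t ht).ne').const_mul (1 - α)).congr_deriv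
      (div_eq_mul_inv _ _).symm)
    (fun t ht => div_nonneg (by linarith) (hpos' t ht).le)]
  refine integral_congr fun t ht => ?_
  have ht := hpos t ht
  have hβ : 1 - α ≠ 0 := by linarith
  simp only [Function.comp_apply]
  rw [mul_comm (1 - α), ← rpow_def_of_pos ht, rpow_sub ht, rpow_one]
  rcases eq_or_ne (log t) 0 with hl | hl
  · simp [hl]
  · have := (rpow_pos_of_pos ht α).ne'
    field_simp

lemma neg_one_le_log_log_two : -1 ≤ log (log 2) := by
  have h₂ : 1 / 2 < log 2 := by linarith [log_two_gt_d9]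
  have := one_sub_inv_le_log_of_pos (by linarith : 0 < log 2)
  have : (log 2)⁻¹ < 2 := by
    rw [inv_lt_comm₀ (by linarith) two_pos]; linarith
  linarith

theorem appendix_A1 :
    ∃ C : ℝ, ∀ α x : ℝ, 1/2 < α → α < 1 → 2 ≤ x →
      ∫ t in (2 : ℝ)..x, 1 / (t ^ α * Real.log t)
        ≤ x ^ (1 - α) / ((1 - α) * Real.log x) + Real.log (Real.log x)
          + C * (x ^ (1 - α) / ((1 - α) ^ 2 * (Real.log x) ^ 2) + 1) := by
  refine ⟨exp 4 + 2, fun α x _ hα hx => ?_⟩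
  have hβ : 0 < 1 - α := by linarith
  have hlog2 : 0 < log 2 := log_pos one_lt_two
  have hlogx : 0 < log x := hlog2.trans_le (log_le_log two_pos hx)
  have hlog2_le : log 2 ≤ 1 := by linarith [log_two_lt_d9]
  have hbound := integral_exp_div_self_le (a := (1 - α) * log 2) (b := (1 - α) * log x)
    (by positivity) (by nlinarith) (by gcongr)
  have hexp : exp ((1 - α) * log x) = x ^ (1 - α) := by
    rw [rpow_def_of_pos (by linarith), mul_comm]
  rw [← integral_one_div_rpow_mul_log_eq hα two_pos (by linarith), hexp, mul_pow,
    log_mul hβ.ne' hlogx.ne', log_mul hβ.ne' hlog2.ne'] at hbound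
  have hT : 0 ≤ exp 4 * (x ^ (1 - α) / ((1 - α) ^ 2 * log x ^ 2)) := by positivity
  linarith [neg_one_le_log_log_two]
end

section
/- There is an absolute constant C such that for all 1/2 < α ≤ 1 and all real x ≥ 2, ∫₂^x dt/(t^{1-α}·(2·log x - log t)) ≤ x^α/(α·log x) + C·x^α/(log x)². -/
/-! Since `log t ≤ log x` on the range of integration, `2 log x - log t ≥ log x`; bounding the
integrand by `t ^ (α - 1) / log x` and integrating exactly gives the claim already with `C = 0`. -/

open Real intervalIntegral

section

variable {α a t x : ℝ}

lemma log_le_two_mul_log_sub_log (ht : 0 < t) (htx : t ≤ x) :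
    log x ≤ 2 * log x - log t := by
  linarith [log_le_log ht htx]

lemma one_div_rpow_mul_two_mul_log_sub_log_le (ht : 0 < t) (htx : t ≤ x) (hx : 0 < log x) :
    1 / (t ^ (1 - α) * (2 * log x - log t)) ≤ t ^ (α - 1) / log x :=
  calc 1 / (t ^ (1 - α) * (2 * log x - log t))
      ≤ 1 / (t ^ (1 - α) * log x) := by
        gcongr
        exact log_le_two_mul_log_sub_log ht htx
    _ = t ^ (α - 1) / log x := by
        rw [show α - 1 = -(1 - α) by ring, rpow_neg ht.le]
        field_simp

lemma intervalIntegrable_one_div_rpow_mul_two_mul_log_sub_log (ha : 0 < a) (hax : a ≤ x)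
    (hx : 0 < log x) :
    IntervalIntegrable (fun t ↦ 1 / (t ^ (1 - α) * (2 * log x - log t)))
      MeasureTheory.volume a x := by
  refine ContinuousOn.intervalIntegrable ?_
  rw [Set.uIcc_of_le hax]
  intro t ht
  have ht0 : 0 < t := ha.trans_le ht.1
  have hden : 0 < 2 * log x - log t := hx.trans_le (log_le_two_mul_log_sub_log ht0 ht.2)
  refine ContinuousAt.continuousWithinAt ?_
  exact continuousAt_const.div
    ((continuousAt_rpow_const t _ (Or.inl ht0.ne')).mul
      (continuousAt_const.sub (continuousAt_log ht0.ne')))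
    (mul_pos (rpow_pos_of_pos ht0 _) hden).ne'

lemma integral_rpow_sub_one_div (hα : 0 < α) (c : ℝ) :
    ∫ t in a..x, t ^ (α - 1) / c = (x ^ α - a ^ α) / (α * c) := by
  rw [intervalIntegral.integral_div, integral_rpow (Or.inl (by linarith)), sub_add_cancel,
    div_div]

end

theorem appendix_A2 :
    ∃ C : ℝ, ∀ α x : ℝ, 1/2 < α → α ≤ 1 → 2 ≤ x →
      ∫ t in (2 : ℝ)..x, 1 / (t ^ (1 - α) * (2 * Real.log x - Real.log t))
        ≤ x ^ α / (α * Real.log x) + C * x ^ α / (Real.log x) ^ 2 := by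
  refine ⟨0, fun α x hα _ hx ↦ ?_⟩
  have hα0 : 0 < α := by linarith
  have hlogx : 0 < log x := log_pos (by linarith)
  have hmono := integral_mono_on hx
    (intervalIntegrable_one_div_rpow_mul_two_mul_log_sub_log two_pos hx hlogx)
    (intervalIntegrable_rpow' (r := α - 1) (by linarith) |>.div_const (log x))
    (fun t ht ↦ one_div_rpow_mul_two_mul_log_sub_log_le (by linarith [ht.1]) ht.2 hlogx)
  rw [integral_rpow_sub_one_div hα0] at hmono
  calc _ ≤ (x ^ α - 2 ^ α) / (α * log x) := hmono
    _ ≤ x ^ α / (α * log x) := by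
        gcongr
        exact sub_le_self _ (rpow_pos_of_pos two_pos α).le
    _ = x ^ α / (α * log x) + 0 * x ^ α / log x ^ 2 := by ring
end
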